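/- arXiv:2501.05048 — 2 statements merged into one kernel-verified Lean document; each statement's English description precedes it below -/
import Mathlib

section
/- Let p ≥ 1, n a positive natural, and R > 0. Let w, ŵ : Fin n → ℝ≥0 with w(i) ≤ 4R for all i and ∑ i, ŵ(i) ≥ n·(R/6). Then (∑ i, (w i)^p)^{1/p} ≤ 24 · (∑ i, (ŵ i)^p)^{1/p}. -/
/-! The bound `w i ≤ 4R` gives `‖w‖_p ≤ n^(1/p) · 4R`, while the power-mean inequality turns the
average `(∑ ŵ i) / n ≥ R/6` into `‖ŵ‖_p ≥ n^(1/p) · R/6`; the factor `n^(1/p)` cancels in the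
ratio, leaving `4R / (R/6) = 24` for every `p ≥ 1`. -/

open Finset

theorem rpow_one_div_mul_rpow {a c p : ℝ} (ha : 0 ≤ a) (hc : 0 ≤ c) (hp : p ≠ 0) :
    (a * c ^ p) ^ (1 / p) = a ^ (1 / p) * c := by
  rw [Real.mul_rpow ha (Real.rpow_nonneg hc p), ← Real.rpow_mul hc, mul_one_div_cancel hp,
    Real.rpow_one]

section PowerSum

variable {ι : Type*} {s : Finset ι} {f : ι → ℝ} {p : ℝ}

theorem sum_rpow_rpow_one_div_le_of_le {M : ℝ} (hp : 0 < p) (hf : ∀ i ∈ s, 0 ≤ f i)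
    (hfM : ∀ i ∈ s, f i ≤ M) (hM : 0 ≤ M) :
    (∑ i ∈ s, f i ^ p) ^ (1 / p) ≤ (#s : ℝ) ^ (1 / p) * M := by
  have hsum : ∑ i ∈ s, f i ^ p ≤ #s * M ^ p := by
    simpa using s.sum_le_card_nsmul _ _ fun i hi ↦ Real.rpow_le_rpow (hf i hi) (hfM i hi) hp.le
  rw [← rpow_one_div_mul_rpow (Nat.cast_nonneg _) hM hp.ne']
  exact Real.rpow_le_rpow (sum_nonneg fun i hi ↦ Real.rpow_nonneg (hf i hi) p) hsum
    (by positivity)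

theorem card_mul_rpow_le_sum_rpow {m : ℝ} (hp : 1 ≤ p) (hf : ∀ i ∈ s, 0 ≤ f i) (hm : 0 ≤ m)
    (hsum : #s * m ≤ ∑ i ∈ s, f i) : #s * m ^ p ≤ ∑ i ∈ s, f i ^ p := by
  rcases s.eq_empty_or_nonempty with rfl | hs
  · simp
  have hcard : (0 : ℝ) < #s := by exact_mod_cast hs.card_pos
  have hjensen : (#s : ℝ) ^ (p - 1) * (#s * m ^ p) ≤ #s ^ (p - 1) * ∑ i ∈ s, f i ^ p :=
    calc (#s : ℝ) ^ (p - 1) * (#s * m ^ p) = (#s * m) ^ p := by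
          rw [Real.mul_rpow hcard.le hm, Real.rpow_sub_one hcard.ne']
          field_simp
      _ ≤ (∑ i ∈ s, f i) ^ p := Real.rpow_le_rpow (by positivity) hsum (by linarith)
      _ ≤ #s ^ (p - 1) * ∑ i ∈ s, f i ^ p :=
          Real.rpow_sum_le_const_mul_sum_rpow_of_nonneg s hp hf
  exact le_of_mul_le_mul_left hjensen (by positivity)

theorem card_rpow_one_div_mul_le_sum_rpow_rpow_one_div {m : ℝ} (hp : 1 ≤ p)
    (hf : ∀ i ∈ s, 0 ≤ f i) (hm : 0 ≤ m) (hsum : #s * m ≤ ∑ i ∈ s, f i) :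
    (#s : ℝ) ^ (1 / p) * m ≤ (∑ i ∈ s, f i ^ p) ^ (1 / p) := by
  rw [← rpow_one_div_mul_rpow (Nat.cast_nonneg _) hm (by linarith)]
  exact Real.rpow_le_rpow (by positivity) (card_mul_rpow_le_sum_rpow hp hf hm hsum)
    (by positivity)

end PowerSum

theorem stmt_6_general (p : ℝ) (hp : 1 ≤ p) (n : ℕ) (R : ℝ) (hR : 0 < R)
    (w what : Fin n → ℝ) (hw0 : ∀ i, 0 ≤ w i) (hwhat0 : ∀ i, 0 ≤ what i)
    (hw : ∀ i, w i ≤ 4 * R) (hwhat : (n : ℝ) * (R / 6) ≤ ∑ i, what i) :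
    (∑ i, (w i) ^ p) ^ (1 / p) ≤ 24 * (∑ i, (what i) ^ p) ^ (1 / p) := by
  have hcard : (#(univ : Finset (Fin n)) : ℝ) = n := by rw [card_univ, Fintype.card_fin]
  calc (∑ i, (w i) ^ p) ^ (1 / p) ≤ (n : ℝ) ^ (1 / p) * (4 * R) := by
        rw [← hcard]
        exact sum_rpow_rpow_one_div_le_of_le (by linarith) (fun i _ ↦ hw0 i) (fun i _ ↦ hw i)
          (by positivity)
    _ = 24 * ((n : ℝ) ^ (1 / p) * (R / 6)) := by ring
    _ ≤ 24 * (∑ i, (what i) ^ p) ^ (1 / p) := by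
        rw [← hcard]
        gcongr
        exact card_rpow_one_div_mul_le_sum_rpow_rpow_one_div hp (fun i _ ↦ hwhat0 i)
          (by positivity) (hcard ▸ hwhat)

theorem stmt_6 (p : ℝ) (hp : 1 ≤ p) (n : ℕ) (hn : 0 < n) (R : ℝ) (hR : 0 < R)
    (w what : Fin n → ℝ) (hw0 : ∀ i, 0 ≤ w i) (hwhat0 : ∀ i, 0 ≤ what i)
    (hw : ∀ i, w i ≤ 4 * R) (hwhat : (n : ℝ) * (R / 6) ≤ ∑ i, what i) :
    (∑ i, (w i) ^ p) ^ (1 / p) ≤ 24 * (∑ i, (what i) ^ p) ^ (1 / p) :=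
  stmt_6_general p hp n R hR w what hw0 hwhat0 hw hwhat
end

section
/- Let c ≥ 1 and let w, ŵ : Fin k → ℝ≥0 be nonincreasing sequences such that ∑_{i<j} w(i) ≤ c · ∑_{i<j} ŵ(i) for every j ≤ k. Then for every p ≥ 1, (∑ i, (w i)^p)^{1/p} ≤ c · (∑ i, (ŵ i)^p)^{1/p}. -/
/-!
By convexity of `t ↦ t ^ p`, `w i ^ p - (c * ŵ i) ^ p ≤ p * w i ^ (p - 1) * (w i - c * ŵ i)`.
The weights `p * w i ^ (p - 1)` are nonnegative and nonincreasing, so Abel summation against the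
nonpositive prefix sums of `w - c • ŵ` shows that the right-hand sides add up to at most `0`.
Hence `∑ w i ^ p ≤ c ^ p * ∑ ŵ i ^ p`; take `p`-th roots.
-/

open Finset

theorem Real.rpow_le_rpow_add_mul_sub {a b p : ℝ} (ha : 0 ≤ a) (hb : 0 ≤ b) (hp : 1 ≤ p) :
    a ^ p ≤ b ^ p + p * a ^ (p - 1) * (a - b) := by
  have hp0 : 0 < p := zero_lt_one.trans_le hp
  -- weighted AM-GM: `a ^ (p - 1) * b = (a ^ p) ^ (1 - 1/p) * (b ^ p) ^ (1/p)`
  have hamgm := Real.geom_mean_le_arith_mean2_weighted (w₁ := 1 - p⁻¹) (w₂ := p⁻¹)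
    (sub_nonneg.2 (inv_le_one_of_one_le₀ hp)) (inv_nonneg.2 hp0.le)
    (Real.rpow_nonneg ha p) (Real.rpow_nonneg hb p) (sub_add_cancel 1 p⁻¹)
  have hexp : p * (1 - p⁻¹) = p - 1 := by field_simp
  rw [← Real.rpow_mul ha, hexp, Real.rpow_rpow_inv hb hp0.ne'] at hamgm
  have hsplit : a ^ p = a ^ (p - 1) * a := by
    simpa using Real.rpow_add' ha (y := p - 1) (z := 1) (by simpa using hp0.ne')
  have key : p * (a ^ (p - 1) * b) ≤ (p - 1) * a ^ p + b ^ p :=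
    calc _ ≤ p * ((1 - p⁻¹) * a ^ p + p⁻¹ * b ^ p) := mul_le_mul_of_nonneg_left hamgm hp0.le
      _ = _ := by field_simp
  rw [mul_sub, mul_assoc p _ a, ← hsplit]
  linarith

theorem Finset.sum_range_mul_nonpos_of_antitone {f d : ℕ → ℝ} (hf0 : ∀ i, 0 ≤ f i)
    (hf : Antitone f) {n : ℕ} (hd : ∀ j ≤ n, ∑ i ∈ range j, d i ≤ 0) :
    ∑ i ∈ range n, f i * d i ≤ 0 := by
  have hparts := sum_range_by_parts f d n
  simp only [smul_eq_mul] at hparts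
  rw [hparts, sub_nonpos]
  calc f (n - 1) * ∑ i ∈ range n, d i ≤ 0 := mul_nonpos_of_nonneg_of_nonpos (hf0 _) (hd n le_rfl)
    _ ≤ _ := sum_nonneg fun i hi => mul_nonneg_of_nonpos_of_nonpos
        (sub_nonpos.2 (hf i.le_succ)) (hd _ (by simp at hi; omega))

theorem Finset.sum_range_rpow_le_of_sum_range_le {x y : ℕ → ℝ} (hx0 : ∀ i, 0 ≤ x i)
    (hy0 : ∀ i, 0 ≤ y i) (hx : Antitone x) {n : ℕ}
    (hxy : ∀ j ≤ n, ∑ i ∈ range j, x i ≤ ∑ i ∈ range j, y i) {p : ℝ} (hp : 1 ≤ p) :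
    ∑ i ∈ range n, x i ^ p ≤ ∑ i ∈ range n, y i ^ p := by
  have hp0 : 0 ≤ p := zero_le_one.trans hp
  have habel : ∑ i ∈ range n, p * x i ^ (p - 1) * (x i - y i) ≤ 0 :=
    sum_range_mul_nonpos_of_antitone (fun i => by have := hx0 i; positivity)
      (fun i j hij => mul_le_mul_of_nonneg_left
        (Real.rpow_le_rpow (hx0 j) (hx hij) (sub_nonneg.2 hp)) hp0)
      (fun j hj => by simpa [sum_sub_distrib] using hxy j hj)
  calc ∑ i ∈ range n, x i ^ p
      ≤ ∑ i ∈ range n, (y i ^ p + p * x i ^ (p - 1) * (x i - y i)) :=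
        sum_le_sum fun i _ => Real.rpow_le_rpow_add_mul_sub (hx0 i) (hy0 i) hp
    _ ≤ ∑ i ∈ range n, y i ^ p := by rw [sum_add_distrib]; linarith

namespace Fin

def extendByZero {k : ℕ} (x : Fin k → ℝ) (n : ℕ) : ℝ := if h : n < k then x ⟨n, h⟩ else 0

variable {k : ℕ} {x : Fin k → ℝ}

@[simp] theorem extendByZero_val (i : Fin k) : extendByZero x i = x i := by
  simp [extendByZero]

theorem extendByZero_nonneg (hx0 : ∀ i, 0 ≤ x i) (n : ℕ) : 0 ≤ extendByZero x n := by
  unfold extendByZero; split_ifs <;> simp [hx0]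

theorem antitone_extendByZero (hx0 : ∀ i, 0 ≤ x i) (hx : Antitone x) :
    Antitone (extendByZero x) := by
  refine antitone_nat_of_succ_le fun n => ?_
  by_cases hn : n + 1 < k
  · simpa [extendByZero, hn, Nat.lt_of_succ_lt hn] using hx (Fin.mk_le_mk.2 n.le_succ)
  · simpa [extendByZero, hn] using extendByZero_nonneg hx0 n

theorem sum_filter_val_lt_eq_sum_range {j : ℕ} (hj : j ≤ k) :
    ∑ i ∈ univ.filter (fun i : Fin k => (i : ℕ) < j), x i = ∑ i ∈ range j, extendByZero x i := by
  calc ∑ i ∈ univ.filter (fun i : Fin k => (i : ℕ) < j), x i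
      = ∑ i : Fin k, if (i : ℕ) < j then extendByZero x i else 0 := by simp [sum_filter]
    _ = ∑ n ∈ range k, if n < j then extendByZero x n else 0 :=
        sum_univ_eq_sum_range (fun n => if n < j then extendByZero x n else 0) k
    _ = ∑ n ∈ range j, extendByZero x n := by
        rw [← sum_filter]
        congr 1
        ext n
        simp only [mem_filter, mem_range]
        omega

theorem sum_rpow_le_of_sum_filter_le {y : Fin k → ℝ} (hx0 : ∀ i, 0 ≤ x i) (hy0 : ∀ i, 0 ≤ y i)
    (hx : Antitone x)
    (hxy : ∀ j ≤ k, ∑ i ∈ univ.filter (fun i : Fin k => (i : ℕ) < j), x i ≤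
      ∑ i ∈ univ.filter (fun i : Fin k => (i : ℕ) < j), y i) {p : ℝ} (hp : 1 ≤ p) :
    ∑ i, x i ^ p ≤ ∑ i, y i ^ p := by
  have hprefix (j : ℕ) (hj : j ≤ k) :
      ∑ i ∈ range j, extendByZero x i ≤ ∑ i ∈ range j, extendByZero y i := by
    simpa only [sum_filter_val_lt_eq_sum_range hj] using hxy j hj
  have h := sum_range_rpow_le_of_sum_range_le (extendByZero_nonneg hx0) (extendByZero_nonneg hy0)
    (antitone_extendByZero hx0 hx) hprefix hp
  rw [← Fin.sum_univ_eq_sum_range (fun n => extendByZero x n ^ p),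
    ← Fin.sum_univ_eq_sum_range (fun n => extendByZero y n ^ p)] at h
  simpa using h

end Fin

theorem stmt_14_general (k : ℕ) (c : ℝ) (hc : 1 ≤ c)
    (w what : Fin k → ℝ) (hw0 : ∀ i, 0 ≤ w i) (hwhat0 : ∀ i, 0 ≤ what i)
    (hwa : Antitone w)
    (hpre : ∀ j ≤ k,
      ∑ i ∈ Finset.univ.filter (fun i : Fin k => (i : ℕ) < j), w i ≤
        c * ∑ i ∈ Finset.univ.filter (fun i : Fin k => (i : ℕ) < j), what i) :
    ∀ p : ℝ, 1 ≤ p →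
      (∑ i, (w i) ^ p) ^ (1 / p) ≤ c * (∑ i, (what i) ^ p) ^ (1 / p) := by
  intro p hp
  have hp0 : 0 < p := zero_lt_one.trans_le hp
  have hc0 : 0 ≤ c := zero_le_one.trans hc
  have hle : ∑ i, w i ^ p ≤ ∑ i, (c * what i) ^ p :=
    Fin.sum_rpow_le_of_sum_filter_le hw0 (fun i => mul_nonneg hc0 (hwhat0 i)) hwa
      (fun j hj => by simpa only [← mul_sum] using hpre j hj) hp
  have hscale : ∑ i, (c * what i) ^ p = c ^ p * ∑ i, what i ^ p := by
    rw [mul_sum]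
    exact sum_congr rfl fun i _ => Real.mul_rpow hc0 (hwhat0 i)
  have hsum0 : 0 ≤ ∑ i, what i ^ p := sum_nonneg fun i _ => Real.rpow_nonneg (hwhat0 i) p
  calc (∑ i, w i ^ p) ^ (1 / p) ≤ (c ^ p * ∑ i, what i ^ p) ^ (1 / p) := by
        rw [← hscale]
        exact Real.rpow_le_rpow (sum_nonneg fun i _ => Real.rpow_nonneg (hw0 i) p) hle
          (by positivity)
    _ = c * (∑ i, what i ^ p) ^ (1 / p) := by
        rw [Real.mul_rpow (Real.rpow_nonneg hc0 p) hsum0, ← Real.rpow_mul hc0,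
          mul_one_div_cancel hp0.ne', Real.rpow_one]

theorem stmt_14 (k : ℕ) (c : ℝ) (hc : 1 ≤ c)
    (w what : Fin k → ℝ) (hw0 : ∀ i, 0 ≤ w i) (hwhat0 : ∀ i, 0 ≤ what i)
    (hwa : Antitone w) (hwhata : Antitone what)
    (hpre : ∀ j ≤ k,
      ∑ i ∈ Finset.univ.filter (fun i : Fin k => (i : ℕ) < j), w i ≤
        c * ∑ i ∈ Finset.univ.filter (fun i : Fin k => (i : ℕ) < j), what i) :
    ∀ p : ℝ, 1 ≤ p →
      (∑ i, (w i) ^ p) ^ (1 / p) ≤ c * (∑ i, (what i) ^ p) ^ (1 / p) :=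
  stmt_14_general k c hc w what hw0 hwhat0 hwa hpre
end
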